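/- Fix integers $m \geq 1$ and $e \geq 1$. Let $C$ be the $e \times e$ tridiagonal matrix over $\mathbb{Z}[q]$ with $C_{11} = 1 + q^e + q^{2e} + \cdots + q^{me}$, $C_{ii} = 1 + q^{me}$ for $2 \leq i \leq e$, $C_{i,i+1} = q^{me}$, $C_{i+1,i} = 1$ for $1 \leq i \leq e-1$, and all other entries $0$. Then $\det C = 1 + q^e + q^{2e} + \cdots + q^{me^2}$. -/

import Mathlib

/-!
Write `D n` for the determinant of the leading `n × n` block and `t = q^{me}`. Expanding along
the last row gives `D (n+2) = (1 + t) D (n+1) - t D n`, so the differences `D (n+1) - D n` are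
multiplied by `t` at each step, starting from `D 1 - D 0 = C₁₁ - 1 = q^e + ⋯ + q^{me}`. Hence
`det C = 1 + (q^e + ⋯ + q^{me}) (1 + q^{me} + ⋯ + q^{me(e-1)})`, and the product of these two
geometric sums in `x = q^e` is `x + x² + ⋯ + x^{me}`.
-/

open Polynomial

/-- The graded Cartan matrix of the Brauer line of type `(m,e)`:
tridiagonal with `C₁₁ = 1 + q^e + ⋯ + q^{me}`, other diagonal entries `1 + q^{me}`,
superdiagonal `q^{me}`, subdiagonal `1`. -/
noncomputable def gradedCartanLine (m e : ℕ) : Matrix (Fin e) (Fin e) (Polynomial ℤ) :=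
  fun i j =>
    if i = j then
      (if (i : ℕ) = 0 then ∑ l ∈ Finset.range (m + 1), X ^ (l * e) else 1 + X ^ (m * e))
    else if (j : ℕ) = (i : ℕ) + 1 then X ^ (m * e)
    else if (i : ℕ) = (j : ℕ) + 1 then 1
    else 0

open Finset

theorem geom_sum_mul_geom_sum_pow {R : Type*} [Semiring R] (x : R) (m n : ℕ) :
    (∑ i ∈ range m, x ^ i) * ∑ k ∈ range n, (x ^ m) ^ k = ∑ i ∈ range (m * n), x ^ i := by
  induction n with
  | zero => simp
  | succ n ih =>
    rw [sum_range_succ, mul_add, ih, Nat.mul_succ, sum_range_add, ← pow_mul, sum_mul]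
    simp_rw [← pow_add, add_comm (m * n)]

namespace Matrix

variable {R : Type*} [CommRing R]

def cornerTridiagonal (a t : R) (n : ℕ) : Matrix (Fin n) (Fin n) R :=
  fun i j =>
    if i = j then (if (i : ℕ) = 0 then a else 1 + t)
    else if (j : ℕ) = i + 1 then t
    else if (i : ℕ) = j + 1 then 1
    else 0

theorem cornerTridiagonal_submatrix_castSucc (a t : R) (n : ℕ) :
    (cornerTridiagonal a t (n + 1)).submatrix Fin.castSucc Fin.castSucc =
      cornerTridiagonal a t n := by
  ext i j
  simp [cornerTridiagonal]

theorem cornerTridiagonal_apply_eq_zero (a t : R) {n : ℕ} {i j : Fin n}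
    (h : (i : ℕ) + 1 < j ∨ (j : ℕ) + 1 < i) : cornerTridiagonal a t n i j = 0 := by
  have hij : i ≠ j := by rintro rfl; omega
  simp only [cornerTridiagonal, if_neg hij]
  rw [if_neg (by omega), if_neg (by omega)]

theorem det_cornerTridiagonal_succ_succ (a t : R) (n : ℕ) :
    (cornerTridiagonal a t (n + 2)).det =
      (1 + t) * (cornerTridiagonal a t (n + 1)).det - t * (cornerTridiagonal a t n).det := by
  -- deleting row `n + 1` and column `n` leaves a block lower triangular matrix, with blocks
  -- `cornerTridiagonal a t n` and `t`
  have h_minor : ((cornerTridiagonal a t (n + 2)).submatrix Fin.castSucc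
      (Fin.last n).castSucc.succAbove).det = t * (cornerTridiagonal a t n).det := by
    rw [det_succ_column _ (Fin.last n), Fin.sum_univ_castSucc, sum_eq_zero fun i _ => by
      rw [submatrix_apply, Fin.succAbove_castSucc_self, Fin.succ_last,
        cornerTridiagonal_apply_eq_zero _ _ (by simp), mul_zero, zero_mul]]
    have hcol : (Fin.last n).castSucc.succAbove ∘ Fin.castSucc = Fin.castSucc ∘ Fin.castSucc :=
      funext fun j => Fin.succAbove_castSucc_of_lt _ _ (Fin.castSucc_lt_last j)
    rw [zero_add, submatrix_apply, Fin.succAbove_castSucc_self, Fin.succ_last, Fin.succAbove_last,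
      submatrix_submatrix, hcol, ← submatrix_submatrix, cornerTridiagonal_submatrix_castSucc,
      cornerTridiagonal_submatrix_castSucc]
    simp [cornerTridiagonal]
  have h_sub : cornerTridiagonal a t (n + 2) (Fin.last (n + 1)) (Fin.last n).castSucc = 1 := by
    simp only [cornerTridiagonal, Fin.ext_iff, Fin.val_last, Fin.val_castSucc]
    rw [if_neg (by omega), if_neg (by omega), if_pos trivial]
  have h_diag : cornerTridiagonal a t (n + 2) (Fin.last (n + 1)) (Fin.last (n + 1)) = 1 + t := by
    simp [cornerTridiagonal]
  rw [det_succ_row _ (Fin.last (n + 1)), Fin.sum_univ_castSucc, Fin.sum_univ_castSucc,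
    sum_eq_zero fun j _ => by
      rw [cornerTridiagonal_apply_eq_zero _ _ (by simp), mul_zero, zero_mul],
    h_sub, h_diag, Fin.succAbove_last, cornerTridiagonal_submatrix_castSucc, h_minor]
  simp only [Fin.val_last, Fin.val_castSucc, odd_add_one_self, Odd.neg_one_pow, Even.add_self,
    Even.neg_pow, one_pow]
  ring

theorem det_cornerTridiagonal (a t : R) (n : ℕ) :
    (cornerTridiagonal a t n).det = 1 + (a - 1) * ∑ k ∈ range n, t ^ k := by
  induction n using Nat.twoStepInduction with
  | zero => simp
  | one => simp [cornerTridiagonal]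
  | more n hn hn1 =>
    rw [det_cornerTridiagonal_succ_succ, hn, hn1, sum_range_succ _ (n + 1), sum_range_succ _ n]
    ring

end Matrix

theorem gradedCartanLine_det_general (m e : ℕ) :
    (gradedCartanLine m e).det = ∑ j ∈ Finset.range (m * e + 1), X ^ (j * e) := by
  have hC : gradedCartanLine m e =
      Matrix.cornerTridiagonal (∑ l ∈ range (m + 1), X ^ (l * e)) (X ^ (m * e)) e := rfl
  rw [hC, Matrix.det_cornerTridiagonal]
  simp_rw [pow_mul']
  rw [geom_sum_succ, add_sub_cancel_right, mul_assoc, geom_sum_mul_geom_sum_pow, geom_sum_succ,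
    add_comm]

/-- The graded Cartan determinant: `det C = 1 + q^e + q^{2e} + ⋯ + q^{me²}`. -/
theorem gradedCartanLine_det (m e : ℕ) (hm : 1 ≤ m) (he : 1 ≤ e) :
    (gradedCartanLine m e).det = ∑ j ∈ Finset.range (m * e + 1), X ^ (j * e) :=
  gradedCartanLine_det_general m e
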